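/- Let (K,<) be a linearly ordered field, let A be a convex valuation subring of K with associated valuation v and value group Γ, and let K₊ = {x ∈ K : x > 0}. Suppose there exists a group homomorphism s : Γ → K₊ (from the additive value group to the multiplicative group of positive elements) with v(s(γ)) = γ for all γ ∈ Γ. Then the map ac : K → ResidueField(A) defined by ac(x) = res(x · s(v(x))⁻¹) for x ≠ 0 and ac(0) = 0 is an angular component map for A that is compatible with <. -/

import Mathlib

/-- A valuation subring of a linearly ordered field is convex if together with any two
of its elements it contains every element of the field lying between them. -/
def IsConvexValuationSubring (K : Type*) [Field K] [LinearOrder K] [IsStrictOrderedRing K]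
    (A : ValuationSubring K) : Prop :=
  ∀ a b c : K, a ∈ A → b ∈ A → a ≤ c → c ≤ b → c ∈ A

open scoped Classical

/-- The residue map of a valuation subring `A`, extended to all of `K` by `0`
outside of `A`. -/
noncomputable def residueOn {K : Type*} [Field K] (A : ValuationSubring K) (x : K) :
    IsLocalRing.ResidueField A :=
  if h : x ∈ A then IsLocalRing.residue A ⟨x, h⟩ else 0

/-- `ac : K → ResidueField A` is an angular component map for `A` compatible with the
order on `K`, where the residue field is equipped with the linear order `lo'`:
`ac 0 = 0`, `ac` is multiplicative, `ac` agrees with the residue map on units of `A`,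
and `x > 0` if and only if `ac x > 0`. -/
def IsCompatibleAngularComponent {K : Type*} [Field K] [LinearOrder K] [IsStrictOrderedRing K]
    (A : ValuationSubring K) (lo' : LinearOrder (IsLocalRing.ResidueField A))
    (ac : K → IsLocalRing.ResidueField A) : Prop :=
  ac 0 = 0 ∧ (∀ x y : K, ac (x * y) = ac x * ac y) ∧
    (∀ (u : K) (h : u ∈ A), u⁻¹ ∈ A → ac u = IsLocalRing.residue A ⟨u, h⟩) ∧
    (∀ x : K, 0 < x ↔ lo'.lt 0 (ac x))

/-! Writing `v` for `A.valuation`, the section `s` splits every `x ≠ 0` as `x = u * s (v x)`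
with `v u = 1`, and `ac x` is the residue of the unit `u`. Multiplicativity of `ac` comes from
that of `s` and `v`; `ac` fixes residues of units because `s 1 = 1`; and since `s` takes positive
values, `x` and `u` have the same sign, which the induced order reads off the residue of `u`. -/

namespace ValuationSubring

variable {K : Type*} [Field K] (A : ValuationSubring K)

theorem residueOn_of_mem {x : K} (hx : x ∈ A) :
    residueOn A x = IsLocalRing.residue A ⟨x, hx⟩ :=
  dif_pos hx

theorem residueOn_mul {x y : K} (hx : x ∈ A) (hy : y ∈ A) :
    residueOn A (x * y) = residueOn A x * residueOn A y := by
  rw [residueOn_of_mem A (A.mul_mem _ _ hx hy), residueOn_of_mem A hx, residueOn_of_mem A hy,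
    ← map_mul]
  rfl

theorem valuation_eq_one_of_mem_of_inv_mem {u : K} (hu : u ∈ A) (hinv : u⁻¹ ∈ A) (hu0 : u ≠ 0) :
    A.valuation u = 1 :=
  (A.valuation_eq_one_iff ⟨u, hu⟩).mp <|
    IsUnit.of_mul_eq_one (⟨u⁻¹, hinv⟩ : A) (Subtype.ext (mul_inv_cancel₀ hu0))

theorem lt_residueOn_iff [LinearOrder K] (lo' : LinearOrder (IsLocalRing.ResidueField A))
    (hind : ∀ a b : A, IsLocalRing.residue A a ≠ IsLocalRing.residue A b →
      (lo'.lt (IsLocalRing.residue A a) (IsLocalRing.residue A b) ↔ (a : K) < (b : K)))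
    {a : K} (ha : a ∈ A) (ha0 : residueOn A a ≠ 0) :
    lo'.lt 0 (residueOn A a) ↔ 0 < a := by
  rw [residueOn_of_mem A ha] at ha0 ⊢
  simpa using hind 0 ⟨a, ha⟩ (by simpa using ha0.symm)

variable (s : A.ValueGroup → K)

noncomputable def unitPart (x : K) : K :=
  x * (s (A.valuation x))⁻¹

variable {A s}

theorem valuation_unitPart (hs_sec : ∀ γ : A.ValueGroup, γ ≠ 0 → A.valuation (s γ) = γ)
    {x : K} (hx : x ≠ 0) : A.valuation (A.unitPart s x) = 1 := by
  have hvx : A.valuation x ≠ 0 := (map_ne_zero _).mpr hx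
  rw [unitPart, map_mul, map_inv₀, hs_sec _ hvx, mul_inv_cancel₀ hvx]

theorem unitPart_mem (hs_sec : ∀ γ : A.ValueGroup, γ ≠ 0 → A.valuation (s γ) = γ)
    {x : K} (hx : x ≠ 0) : A.unitPart s x ∈ A :=
  A.mem_of_valuation_le_one _ (valuation_unitPart hs_sec hx).le

theorem residueOn_unitPart_ne_zero
    (hs_sec : ∀ γ : A.ValueGroup, γ ≠ 0 → A.valuation (s γ) = γ) {x : K} (hx : x ≠ 0) :
    residueOn A (A.unitPart s x) ≠ 0 := by
  rw [residueOn_of_mem A (unitPart_mem hs_sec hx), IsLocalRing.residue_ne_zero_iff_isUnit,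
    valuation_eq_one_iff]
  exact valuation_unitPart hs_sec hx

theorem unitPart_mul (hs_mul : ∀ γ δ : A.ValueGroup, γ ≠ 0 → δ ≠ 0 → s (γ * δ) = s γ * s δ)
    {x y : K} (hx : x ≠ 0) (hy : y ≠ 0) :
    A.unitPart s (x * y) = A.unitPart s x * A.unitPart s y := by
  simp only [unitPart, map_mul,
    hs_mul _ _ ((map_ne_zero _).mpr hx) ((map_ne_zero _).mpr hy), mul_inv]
  ring

theorem unitPart_eq_self (hs_one : s 1 = 1) {u : K} (hu : A.valuation u = 1) :
    A.unitPart s u = u := by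
  rw [unitPart, hu, hs_one, inv_one, mul_one]

theorem unitPart_pos_iff [LinearOrder K] [IsStrictOrderedRing K]
    (hs_pos : ∀ γ : A.ValueGroup, γ ≠ 0 → 0 < s γ) {x : K} (hx : x ≠ 0) :
    0 < A.unitPart s x ↔ 0 < x :=
  mul_pos_iff_of_pos_right (inv_pos.mpr (hs_pos _ ((map_ne_zero _).mpr hx)))

end ValuationSubring

open ValuationSubring

theorem angularComponent_of_valuationSection_general (K : Type*) [Field K] [LinearOrder K] [IsStrictOrderedRing K]
    (A : ValuationSubring K)
    -- `lo'` is the induced order on the residue field of `A`: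
    (lo' : LinearOrder (IsLocalRing.ResidueField A))
    (hind : ∀ a b : A, IsLocalRing.residue A a ≠ IsLocalRing.residue A b →
      (lo'.lt (IsLocalRing.residue A a) (IsLocalRing.residue A b) ↔ (a : K) < (b : K)))
    -- `s : Γ → K₊` is a group homomorphism with `v (s γ) = γ`:
    (s : A.ValueGroup → K)
    (hs_pos : ∀ γ : A.ValueGroup, γ ≠ 0 → 0 < s γ)
    (hs_mul : ∀ γ δ : A.ValueGroup, γ ≠ 0 → δ ≠ 0 → s (γ * δ) = s γ * s δ)
    (hs_sec : ∀ γ : A.ValueGroup, γ ≠ 0 → A.valuation (s γ) = γ) :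
    IsCompatibleAngularComponent A lo'
      (fun x => if x = 0 then 0 else residueOn A (x * (s (A.valuation x))⁻¹)) := by
  have hs_one : s 1 = 1 := by
    have h := hs_mul 1 1 one_ne_zero one_ne_zero
    rw [mul_one] at h
    exact (mul_eq_left₀ (hs_pos 1 one_ne_zero).ne').mp h.symm
  change IsCompatibleAngularComponent A lo'
    (fun x => if x = 0 then 0 else residueOn A (A.unitPart s x))
  refine ⟨if_pos rfl, fun x y => ?_, fun u hu hinv => ?_, fun x => ?_⟩ <;> dsimp only
  · rcases eq_or_ne x 0 with rfl | hx
    · simp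
    rcases eq_or_ne y 0 with rfl | hy
    · simp
    rw [if_neg (mul_ne_zero hx hy), if_neg hx, if_neg hy, unitPart_mul hs_mul hx hy,
      residueOn_mul A (unitPart_mem hs_sec hx) (unitPart_mem hs_sec hy)]
  · rcases eq_or_ne u 0 with rfl | hu0
    · exact (if_pos rfl).trans (map_zero _).symm
    rw [if_neg hu0, unitPart_eq_self hs_one (valuation_eq_one_of_mem_of_inv_mem A hu hinv hu0),
      residueOn_of_mem A hu]
  · rcases eq_or_ne x 0 with rfl | hx
    · rw [if_pos rfl]
      exact iff_of_false (lt_irrefl 0) (@lt_irrefl _ lo'.toPreorder 0)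
    rw [if_neg hx, lt_residueOn_iff A lo' hind (unitPart_mem hs_sec hx)
      (residueOn_unitPart_ne_zero hs_sec hx), unitPart_pos_iff hs_pos hx]

/-- Let `(K, <)` be a linearly ordered field, `A` a convex valuation subring of `K`
with associated valuation `v : K → Γ` (where `Γ = A.ValueGroup` is written
multiplicatively, with an absorbing bottom element `0 = v 0`), and let `K₊` be the
multiplicative group of positive elements of `K`. If `s : Γ → K₊` is a group
homomorphism which is a section of `v` (on nonzero values of `Γ`), then the map
`ac` defined by `ac x = res (x * s (v x)⁻¹)` for `x ≠ 0` and `ac 0 = 0` is an angular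
component map for `A` compatible with `<` (the residue field being equipped with its
induced order `lo'`). -/
theorem angularComponent_of_valuationSection (K : Type*) [Field K] [LinearOrder K] [IsStrictOrderedRing K]
    (A : ValuationSubring K) (hconv : IsConvexValuationSubring K A)
    -- `lo'` is the induced order on the residue field of `A`:
    (lo' : LinearOrder (IsLocalRing.ResidueField A))
    (hind : ∀ a b : A, IsLocalRing.residue A a ≠ IsLocalRing.residue A b →
      (lo'.lt (IsLocalRing.residue A a) (IsLocalRing.residue A b) ↔ (a : K) < (b : K)))
    -- `s : Γ → K₊` is a group homomorphism with `v (s γ) = γ`: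
    (s : A.ValueGroup → K)
    (hs_pos : ∀ γ : A.ValueGroup, γ ≠ 0 → 0 < s γ)
    (hs_mul : ∀ γ δ : A.ValueGroup, γ ≠ 0 → δ ≠ 0 → s (γ * δ) = s γ * s δ)
    (hs_sec : ∀ γ : A.ValueGroup, γ ≠ 0 → A.valuation (s γ) = γ) :
    IsCompatibleAngularComponent A lo'
      (fun x => if x = 0 then 0 else residueOn A (x * (s (A.valuation x))⁻¹)) :=
  angularComponent_of_valuationSection_general K A lo' hind s hs_pos hs_mul hs_sec
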